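/- Let $\pi : X \to S$ be an unramified separated morphism of noetherian schemes. Then $\pi$ has at most finitely many sections $\zeta : S \to X$. -/

import Mathlib

/-!
A section `ζ` of the separated morphism `π` is a closed immersion, so its stalk maps are
surjective. They are also injective: composed with the inverse of the stalk map of `ζ ≫ π = 𝟙`,
the stalk map of `ζ` becomes a retraction of a noetherian local ring that is formally unramified
over the target, and such a retraction is injective by Krull's intersection theorem. Hence `ζ` is
flat, and a flat monomorphism locally of finite presentation is an open immersion. So the image
of `ζ` is clopen and determines `ζ`, while a noetherian space has only finitely many clopen
subsets, each being a union of the finitely many irreducible components.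
-/

open AlgebraicGeometry CategoryTheory TopologicalSpace

universe u

namespace PaperFF

/-- A morphism of schemes is unramified if it is locally of finite type and all of its
stalk maps are formally unramified. -/
def IsUnramifiedMor {X Y : Scheme.{u}} (f : X ⟶ Y) : Prop :=
  LocallyOfFiniteType f ∧ ∀ x : X,
    letI : Algebra (Y.presheaf.stalk (f.base x)) (X.presheaf.stalk x) :=
      RingHom.toAlgebra (f.stalkMap x).hom
    Algebra.FormallyUnramified (Y.presheaf.stalk (f.base x)) (X.presheaf.stalk x)

end PaperFF

theorem Algebra.FormallyUnramified.injective_of_algHom {R A : Type*} [CommRing R] [Nontrivial R]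
    [CommRing A] [IsLocalRing A] [IsNoetherianRing A] [Algebra R A] [FormallyUnramified R A]
    (p : A →ₐ[R] R) : Function.Injective p := by
  have hsub_mem : ∀ a, a - algebraMap R A (p a) ∈ IsLocalRing.maximalIdeal A := fun a =>
    IsLocalRing.le_maximalIdeal (RingHom.ker_ne_top p) (by simp [RingHom.mem_ker])
  have hid : AlgHom.id R A = (Algebra.ofId R A).comp p :=
    ext_of_iInf (I := IsLocalRing.maximalIdeal A)
      (Ideal.iInf_pow_eq_bot_of_isLocalRing _ (IsLocalRing.maximalIdeal.isMaximal A).ne_top)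
      fun a => Ideal.Quotient.eq.mpr (hsub_mem a)
  exact Function.LeftInverse.injective (g := algebraMap R A) fun a => congr(($hid) a).symm

theorem TopologicalSpace.NoetherianSpace.finite_clopens {α : Type*} [TopologicalSpace α]
    [NoetherianSpace α] : Finite (Clopens α) := by
  have := (finite_irreducibleComponents (α := α)).to_subtype
  have hunion (s : Clopens α) :
      (s : Set α) = ⋃ C ∈ {C : irreducibleComponents α | C.1 ⊆ s}, C.1 := by
    refine subset_antisymm (fun x hx => ?_) (Set.iUnion₂_subset fun C hC => hC)
    refine Set.mem_biUnion (x := ⟨_, irreducibleComponent_mem_irreducibleComponents x⟩) ?_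
      mem_irreducibleComponent
    exact isIrreducible_irreducibleComponent.isConnected.isPreconnected.subset_isClopen s.isClopen
      ⟨x, mem_irreducibleComponent, hx⟩
  refine Finite.of_injective (fun s : Clopens α => {C : irreducibleComponents α | C.1 ⊆ s})
    fun s t hst => SetLike.coe_injective ?_
  have hst' : {C : irreducibleComponents α | C.1 ⊆ s} = {C | C.1 ⊆ (t : Set α)} := hst
  rw [hunion s, hunion t, hst']

namespace PaperFF

lemma stalkMap_injective_of_isIso_comp {S X Y : Scheme.{u}} [IsLocallyNoetherian X]
    (f : S ⟶ X) {π : X ⟶ Y} (hπ : IsUnramifiedMor π) (s : S)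
    [IsIso ((f ≫ π).stalkMap s)] : Function.Injective (f.stalkMap s) := by
  -- `(f ≫ π).stalkMap s` with its source written as the stalk at `π (f s)`, to match `π.stalkMap`
  let c : Y.presheaf.stalk (π.base (f.base s)) ⟶ S.presheaf.stalk s := (f ≫ π).stalkMap s
  have : IsIso c := ‹_›
  have hc : π.stalkMap (f.base s) ≫ f.stalkMap s = c := (Scheme.Hom.stalkMap_comp f π s).symm
  let := (π.stalkMap (f.base s)).hom.toAlgebra
  have := hπ.2 (f.base s)
  let p : X.presheaf.stalk (f.base s) →ₐ[Y.presheaf.stalk (π.base (f.base s))]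
      Y.presheaf.stalk (π.base (f.base s)) :=
    { toRingHom := (f.stalkMap s ≫ inv c).hom
      commutes' := fun r => by
        change (π.stalkMap (f.base s) ≫ f.stalkMap s ≫ inv c) r = r
        rw [← Category.assoc, hc, IsIso.hom_inv_id]
        rfl }
  exact Function.Injective.of_comp (Algebra.FormallyUnramified.injective_of_algHom p)

section

variable {X S : Scheme.{u}} {π : X ⟶ S}

lemma isClosedImmersion_of_comp_eq_id [IsSeparated π] {ζ : S ⟶ X} (hζ : ζ ≫ π = 𝟙 S) :
    IsClosedImmersion ζ := by
  have : IsClosedImmersion (ζ ≫ π) := by rw [hζ]; infer_instance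
  exact .of_comp ζ π

lemma isOpenImmersion_of_comp_eq_id [IsLocallyNoetherian X] [IsSeparated π]
    (hπ : IsUnramifiedMor π) {ζ : S ⟶ X} (hζ : ζ ≫ π = 𝟙 S) : IsOpenImmersion ζ := by
  have := isClosedImmersion_of_comp_eq_id hζ
  have : IsSplitMono ζ := .mk' ⟨π, hζ⟩
  have : Flat ζ := Flat.of_stalkMap ζ fun s => by
    have : IsIso ((ζ ≫ π).stalkMap s) := by rw [hζ]; infer_instance
    exact .of_bijective ⟨stalkMap_injective_of_isIso_comp ζ hπ s, ζ.stalkMap_surjective s⟩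
  exact .of_flat_of_mono ζ

lemma isClopen_range_of_comp_eq_id [IsLocallyNoetherian X] [IsSeparated π]
    (hπ : IsUnramifiedMor π) {ζ : S ⟶ X} (hζ : ζ ≫ π = 𝟙 S) : IsClopen (Set.range ζ.base) := by
  have := isClosedImmersion_of_comp_eq_id hζ
  have := isOpenImmersion_of_comp_eq_id hπ hζ
  exact ⟨ζ.isClosedEmbedding.isClosed_range, ζ.isOpenEmbedding.isOpen_range⟩

lemma eq_of_comp_eq_id_of_range_subset {ζ ζ' : S ⟶ X} [IsOpenImmersion ζ] (hζ : ζ ≫ π = 𝟙 S)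
    (hζ' : ζ' ≫ π = 𝟙 S) (hrange : Set.range ζ'.base ⊆ Set.range ζ.base) : ζ' = ζ := by
  have hlift := IsOpenImmersion.lift_fac ζ ζ' hrange
  have hid : IsOpenImmersion.lift ζ ζ' hrange = 𝟙 S := by
    simpa only [Category.assoc, hζ, hζ', Category.comp_id] using congr($hlift ≫ π)
  rw [← hlift, hid, Category.id_comp]

end

theorem finite_sections_of_unramified_general {X S : Scheme.{u}}
    [IsNoetherian X] (π : X ⟶ S) (hur : IsUnramifiedMor π)
    [IsSeparated π] : Finite {ζ : S ⟶ X // ζ ≫ π = 𝟙 S} := by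
  have := NoetherianSpace.finite_clopens (α := X)
  refine Finite.of_injective
    (fun ζ : {ζ : S ⟶ X // ζ ≫ π = 𝟙 S} => (⟨_, isClopen_range_of_comp_eq_id hur ζ.2⟩ : Clopens X))
    fun ζ ζ' hrange => Subtype.ext ?_
  have := isOpenImmersion_of_comp_eq_id hur ζ'.2
  exact eq_of_comp_eq_id_of_range_subset ζ'.2 ζ.2 (congr(($hrange : Set X)).subset)

/-- an unramified separated morphism of noetherian schemes has at most
finitely many sections. -/
theorem finite_sections_of_unramified {X S : Scheme.{u}}
    [IsNoetherian X] [IsNoetherian S] (π : X ⟶ S) (hur : IsUnramifiedMor π)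
    [IsSeparated π] : Finite {ζ : S ⟶ X // ζ ≫ π = 𝟙 S} :=
  finite_sections_of_unramified_general π hur

end PaperFF
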